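/- For a Kirchhoff-Love deformation V = ωN + θ_*W − t∇ω of the normal bundle, the strain tensor e = ½ L_V δ|_M (half the Lie derivative of the induced metric) satisfies e(X, N) = 0 for every vector X tangent to the parallel surfaces, and e(N, N) = 0; i.e., e_{33} = 0 and e_{3α} = 0 in the chart Φ. -/

import Mathlib

/-!
Both strain components are derivatives in `ε` of functions that are constant in `ε`: `⟪n_ε, n_ε⟫ ≡ 1`,
and `⟪n_ε, ∂_α φ_ε + t ∂_α n_ε⟫ ≡ 0`, because `n_ε` is normal to the surface and, having constant
length, is orthogonal to its own derivatives.
-/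

open Topology

section

variable {E F : Type*} [NormedAddCommGroup E] [NormedSpace ℝ E]
  [NormedAddCommGroup F] [InnerProductSpace ℝ F]

theorem inner_fderiv_self_eq_zero_of_inner_self_eventually_const {f : E → F} {x : E} {c : ℝ}
    (hf : DifferentiableAt ℝ f x) (hc : ∀ᶠ y in 𝓝 x, inner ℝ (f y) (f y) = c) (v : E) :
    inner ℝ (f x) (fderiv ℝ f x v) = 0 := by
  have hzero : fderiv ℝ (fun y => inner ℝ (f y) (f y)) x v = 0 := by
    rw [Filter.EventuallyEq.fderiv_eq (f := fun _ => c) hc, fderiv_const_apply, zero_apply]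
  rw [fderiv_inner_apply ℝ hf hf, real_inner_comm (f x)] at hzero
  linarith

theorem inner_fderiv_add_smul_eq_of_inner_self_eventually_const {φ n : E → F} {x : E} {c : ℝ}
    (hφ : DifferentiableAt ℝ φ x) (hn : DifferentiableAt ℝ n x)
    (hc : ∀ᶠ y in 𝓝 x, inner ℝ (n y) (n y) = c) (t : ℝ) (v : E) :
    inner ℝ (n x) (fderiv ℝ (fun y => φ y + t • n y) x v) = inner ℝ (n x) (fderiv ℝ φ x v) := by
  rw [fderiv_fun_add (g := fun y => t • n y) hφ (hn.const_smul t), fderiv_fun_const_smul hn,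
    add_apply, smul_apply, inner_add_right, inner_smul_right,
    inner_fderiv_self_eq_zero_of_inner_self_eventually_const hn hc, mul_zero, add_zero]

end

/-- For a Kirchhoff-Love (bundle-preserving) deformation
`Φ_ε(q,t) = φ_ε(q) + t n_ε(q)` of the normal bundle, the strain tensor
`e_{ij} = ½ (d/dε)|_{ε=0} (∂_i Φ_ε · ∂_j Φ_ε)` satisfies `e_{33} = 0` and
`e_{3α} = 0` (α = 1,2) in the chart `Φ`; i.e. `e(X, N) = 0` for `X` tangent to the
parallel surfaces and `e(N, N) = 0`.  Here `∂_3 Φ_ε = n_ε` and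
`∂_α Φ_ε = ∂_α φ_ε + t ∂_α n_ε`. -/
theorem strain_normal_components_vanish
    (φf nf : ℝ → (Fin 2 → ℝ) → EuclideanSpace ℝ (Fin 3))
    (q : Fin 2 → ℝ) (t : ℝ)
    (hunit : ∀ ε q', (inner ℝ (nf ε q') (nf ε q') : ℝ) = 1)
    (horth : ∀ ε q' α, (inner ℝ (nf ε q') (fderiv ℝ (φf ε) q' (Pi.single α 1)) : ℝ) = 0)
    (hdφ : ∀ ε, DifferentiableAt ℝ (φf ε) q)
    (hdn : ∀ ε, DifferentiableAt ℝ (nf ε) q) :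
    ((1 : ℝ) / 2) * deriv (fun ε => (inner ℝ (nf ε q) (nf ε q) : ℝ)) 0 = 0 ∧
      ∀ α : Fin 2, ((1 : ℝ) / 2) * deriv (fun ε =>
        (inner ℝ (nf ε q)
          (fderiv ℝ (fun q' => φf ε q' + t • nf ε q') q (Pi.single α 1)) : ℝ)) 0 = 0 := by
  refine ⟨by simp only [hunit, deriv_const, mul_zero], fun α => ?_⟩
  have hshear : (fun ε => inner ℝ (nf ε q)
      (fderiv ℝ (fun q' => φf ε q' + t • nf ε q') q (Pi.single α 1))) = fun _ => (0 : ℝ) := by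
    funext ε
    rw [inner_fderiv_add_smul_eq_of_inner_self_eventually_const (hdφ ε) (hdn ε)
      (.of_forall (hunit ε)), horth]
  simp [hshear]
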